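/- If δ = (n+3)/(n+1), then γ_{2,0}(δ) = γ_{1,0}(δ), and the equation (γ_{2,0} − γ_{1,0})·x = 2((n+1)λ₁ + 1) has a solution x if and only if λ₁ = −1/(n+1); similarly the corresponding equation with λ₂ forces λ₂ = −1/(n+1). Consequently, since the prolongation equation for the symmetric mixed symbol requires (n+1)λ₁ = 0 or (n+1)λ₂ = 0, no projectively equivariant symbol map exists on second order bidifferential operators when δ = (n+3)/(n+1); in particular the two conditions λ₁ = λ₂ = −1/(n+1) and (λ₁ = 0 or λ₂ = 0) are incompatible. -/

import Mathlib

/-- The Casimir eigenvalue γ_{i,q} on symbols of bidifferential operators. -/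
noncomputable def gammaEig (n : ℕ) (δ : ℝ) (i q : ℕ) : ℝ :=
  (n : ℝ) * ((n : ℝ) + 1) * δ * (δ - 1)
    - 2 * (((n : ℝ) + 1) * δ - (n : ℝ) + (q : ℝ)) * (i : ℝ)
    + 2 * (i : ℝ) ^ 2 + 2 * (q : ℝ) * ((q : ℝ) - 1)

/-- At the critical shift δ = (n+3)/(n+1): γ_{2,0} = γ_{1,0}, the degenerate
prolongation equations force λ₁ = λ₂ = −1/(n+1), and this is incompatible with
λ₁ = 0 or λ₂ = 0, so no projectively equivariant symbol map exists. -/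
theorem stmt18 (n : ℕ) (hn : 2 ≤ n) (lam₁ lam₂ : ℝ)
    (δ : ℝ) (hδ : δ = ((n : ℝ) + 3) / ((n : ℝ) + 1)) :
    gammaEig n δ 2 0 = gammaEig n δ 1 0 ∧
    ((∃ x : ℝ, (gammaEig n δ 2 0 - gammaEig n δ 1 0) * x
        = 2 * (((n : ℝ) + 1) * lam₁ + 1)) ↔ lam₁ = -1 / ((n : ℝ) + 1)) ∧
    ((∃ x : ℝ, (gammaEig n δ 2 0 - gammaEig n δ 1 0) * x
        = 2 * (((n : ℝ) + 1) * lam₂ + 1)) ↔ lam₂ = -1 / ((n : ℝ) + 1)) ∧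
    ¬ (lam₁ = -1 / ((n : ℝ) + 1) ∧ lam₂ = -1 / ((n : ℝ) + 1) ∧
        (lam₁ = 0 ∨ lam₂ = 0)) := by
  have hne : ((n : ℝ) + 1) ≠ 0 := by positivity
  have heq : gammaEig n δ 2 0 = gammaEig n δ 1 0 := by
    simp only [gammaEig, hδ]
    push_cast
    field_simp
    ring
  have hsub : gammaEig n δ 2 0 - gammaEig n δ 1 0 = 0 := by rw [heq]; ring
  have key : ∀ lam : ℝ,
      (∃ x : ℝ, (gammaEig n δ 2 0 - gammaEig n δ 1 0) * x
        = 2 * (((n : ℝ) + 1) * lam + 1)) ↔ lam = -1 / ((n : ℝ) + 1) := by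
    intro lam
    rw [hsub]
    constructor
    · rintro ⟨x, hx⟩
      rw [zero_mul] at hx
      have h1 : ((n : ℝ) + 1) * lam + 1 = 0 := by linarith
      field_simp
      linarith
    · intro h
      refine ⟨0, ?_⟩
      rw [h]
      field_simp
      ring
  refine ⟨heq, key lam₁, key lam₂, ?_⟩
  rintro ⟨h1, h2, h3 | h3⟩
  · rw [h3] at h1; field_simp at h1; linarith
  · rw [h3] at h2; field_simp at h2; linarith
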